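/- arXiv:2301.12593 — 2 statements merged into one kernel-verified Lean document; each statement's English description precedes it below -/
import Mathlib

section
/- Let S×A be finite state and action spaces, π a stationary policy, c : S×A → ℝ a bounded cost function, γ ∈ [0,1), and for each (s,a) let ρ_{s,a} be a functional on bounded functions of the transition model that is monotone, translation invariant, and positively homogeneous. Then the RAMU Bellman operator T Q(s,a) = c(s,a) + γ ρ_{s,a}(E_{s'∼p_{s,a}}[E_{a'∼π(·|s')}[Q(s',a')]]) is a γ-contraction in the sup-norm on the space of Q-functions. -/
open Finset

/-- The RAMU Bellman operator
T Q(s,a) = c(s,a) + γ ρ_{s,a}(E_{s'∼p}[E_{a'∼π(·|s')}[Q(s',a')]])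
is a γ-contraction in the sup-norm, when each ρ_{s,a} is a monotone,
translation invariant, positively homogeneous functional on (bounded)
functions of the transition model p ∈ P(S). -/
theorem ramu_bellman_contraction
    {S A : Type*} [Fintype S] [Fintype A] [Nonempty S] [Nonempty A]
    (π : S → A → ℝ) (hπ0 : ∀ s a, 0 ≤ π s a) (hπ1 : ∀ s, ∑ a, π s a = 1)
    (c : S × A → ℝ) (γ : ℝ) (hγ0 : 0 ≤ γ) (hγ1 : γ < 1)
    -- P(S): the probability simplex over S
    (ρ : S → A → ({p : S → ℝ // (∀ s', 0 ≤ p s') ∧ ∑ s', p s' = 1} → ℝ) → ℝ)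
    (hmono : ∀ s a X Y, (∀ p, X p ≤ Y p) → ρ s a X ≤ ρ s a Y)
    (htrans : ∀ s a X (α : ℝ), ρ s a (fun p => X p + α) = ρ s a X + α)
    (hpos : ∀ s a (τ : ℝ), 0 ≤ τ → ∀ X, ρ s a (fun p => τ * X p) = τ * ρ s a X)
    (T : (S × A → ℝ) → (S × A → ℝ))
    (hT : ∀ Q s a, T Q (s, a) = c (s, a) +
      γ * ρ s a (fun p => ∑ s', p.1 s' * ∑ a', π s' a' * Q (s', a'))) :
    ∀ Q₁ Q₂ : S × A → ℝ, ∀ s a,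
      |T Q₁ (s, a) - T Q₂ (s, a)| ≤ γ * ⨆ sa : S × A, |Q₁ sa - Q₂ sa| := by
  intro Q₁ Q₂ s a
  set f : S × A → ℝ := fun sa => |Q₁ sa - Q₂ sa| with hf
  set M : ℝ := ⨆ sa : S × A, f sa with hMdef
  have hbdd : BddAbove (Set.range f) := (Set.finite_range f).bddAbove
  have hM : ∀ sa, f sa ≤ M := fun sa => le_ciSup hbdd sa
  -- the two inner functionals
  set X₁ : {p : S → ℝ // (∀ s', 0 ≤ p s') ∧ ∑ s', p s' = 1} → ℝ :=
    fun p => ∑ s', p.1 s' * ∑ a', π s' a' * Q₁ (s', a') with hX₁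
  set X₂ : {p : S → ℝ // (∀ s', 0 ≤ p s') ∧ ∑ s', p s' = 1} → ℝ :=
    fun p => ∑ s', p.1 s' * ∑ a', π s' a' * Q₂ (s', a') with hX₂
  have key : ∀ p, |X₁ p - X₂ p| ≤ M := by
    intro p
    have h1 : X₁ p - X₂ p = ∑ s', p.1 s' * ∑ a', π s' a' * (Q₁ (s', a') - Q₂ (s', a')) := by
      simp only [hX₁, hX₂, ← Finset.sum_sub_distrib, ← mul_sub]
    rw [h1]
    calc |∑ s', p.1 s' * ∑ a', π s' a' * (Q₁ (s', a') - Q₂ (s', a'))|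
        ≤ ∑ s', |p.1 s' * ∑ a', π s' a' * (Q₁ (s', a') - Q₂ (s', a'))| :=
          Finset.abs_sum_le_sum_abs _ _
      _ ≤ ∑ s', p.1 s' * M := by
          apply Finset.sum_le_sum
          intro s' _
          rw [abs_mul, abs_of_nonneg (p.2.1 s')]
          apply mul_le_mul_of_nonneg_left _ (p.2.1 s')
          calc |∑ a', π s' a' * (Q₁ (s', a') - Q₂ (s', a'))|
              ≤ ∑ a', |π s' a' * (Q₁ (s', a') - Q₂ (s', a'))| :=
                Finset.abs_sum_le_sum_abs _ _
            _ ≤ ∑ a', π s' a' * M := by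
                apply Finset.sum_le_sum
                intro a' _
                rw [abs_mul, abs_of_nonneg (hπ0 s' a')]
                exact mul_le_mul_of_nonneg_left (hM (s', a')) (hπ0 s' a')
            _ = M := by rw [← Finset.sum_mul, hπ1 s', one_mul]
      _ = M := by rw [← Finset.sum_mul, p.2.2, one_mul]
  have h12 : ρ s a X₁ ≤ ρ s a X₂ + M := by
    have := hmono s a X₁ (fun p => X₂ p + M)
      (fun p => by have h := (abs_le.mp (key p)).2; linarith)
    rwa [htrans s a X₂ M] at this
  have h21 : ρ s a X₂ ≤ ρ s a X₁ + M := by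
    have := hmono s a X₂ (fun p => X₁ p + M)
      (fun p => by have h := (abs_le.mp (key p)).1; linarith)
    rwa [htrans s a X₁ M] at this
  have habs : |ρ s a X₁ - ρ s a X₂| ≤ M := abs_le.mpr ⟨by linarith, by linarith⟩
  have hTeq : T Q₁ (s, a) - T Q₂ (s, a) = γ * (ρ s a X₁ - ρ s a X₂) := by
    rw [hT Q₁ s a, hT Q₂ s a]; ring
  rw [hTeq, abs_mul, abs_of_nonneg hγ0]
  exact mul_le_mul_of_nonneg_left habs hγ0
end

section
/- Suppose ρ admits the dual representation ρ(Z) = sup_{β ∈ U} E_β[Z] over a set U of probability measures absolutely continuous with respect to μ. Then the RAMU cost Bellman operator T_{ρ,c}Q(s,a) = ρ_{p∼μ_{s,a}}(c(s,a) + γ E_{s'∼p}[E_{a'∼π}[Q(s',a')]]) equals c(s,a) + γ sup_{β∈U_{s,a}} E_{p∼β_{s,a}}[E_{s'∼p}[E_{a'∼π}[Q(s',a')]]], i.e., it coincides with a distributionally robust Bellman operator. -/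
open MeasureTheory Finset

/-- If ρ admits the coherent dual representation
ρ(Z) = sup_{β ∈ U_{s,a}} E_β[Z], then the RAMU cost Bellman operator
T_{ρ,c}Q(s,a) = ρ_{p∼μ_{s,a}}(c(s,a) + γ E_{s'∼p}[E_{a'∼π}[Q(s',a')]])
coincides with the distributionally robust Bellman operator
c(s,a) + γ sup_{β ∈ U_{s,a}} E_{p∼β}[E_{s'∼p}[E_{a'∼π}[Q(s',a')]]]. -/
theorem ramu_bellman_eq_distributionally_robust
    {S A : Type*} [Fintype S] [Fintype A] [Nonempty S] [Nonempty A]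
    (π : S → A → ℝ) (hπ0 : ∀ s a, 0 ≤ π s a) (hπ1 : ∀ s, ∑ a, π s a = 1)
    (c : S × A → ℝ) (γ : ℝ) (hγ0 : 0 ≤ γ) (hγ1 : γ < 1)
    (ρ : S → A → ({p : S → ℝ // (∀ s', 0 ≤ p s') ∧ ∑ s', p s' = 1} → ℝ) → ℝ)
    (U : S → A → Set (Measure {p : S → ℝ // (∀ s', 0 ≤ p s') ∧ ∑ s', p s' = 1}))
    (hUne : ∀ s a, (U s a).Nonempty)
    (hprob : ∀ s a, ∀ β ∈ U s a, IsProbabilityMeasure β)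
    (hrep : ∀ s a (Z : {p : S → ℝ // (∀ s', 0 ≤ p s') ∧ ∑ s', p s' = 1} → ℝ),
      ρ s a Z = sSup ((fun β => ∫ p, Z p ∂β) '' U s a))
    (Q : S × A → ℝ) (s : S) (a : A) :
    ρ s a (fun p => c (s, a) + γ * ∑ s', p.1 s' * ∑ a', π s' a' * Q (s', a')) =
      c (s, a) + γ * sSup ((fun β =>
        ∫ p, (∑ s', p.1 s' * ∑ a', π s' a' * Q (s', a')) ∂β) '' U s a) := by
  classical
  set w : S → ℝ := fun s' => ∑ a', π s' a' * Q (s', a') with hw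
  set f : {p : S → ℝ // (∀ s', 0 ≤ p s') ∧ ∑ s', p s' = 1} → ℝ :=
    fun p => ∑ s', p.1 s' * w s' with hf
  -- measurability of f
  have hmeas : Measurable f := by
    apply Finset.measurable_sum
    intro s' _
    exact ((measurable_pi_apply s').comp measurable_subtype_coe).mul_const _
  -- bound |f p| ≤ B
  set B : ℝ := ∑ s', |w s'| with hB
  have hbound : ∀ p, |f p| ≤ B := by
    intro p
    calc |f p| ≤ ∑ s', |p.1 s' * w s'| := Finset.abs_sum_le_sum_abs _ _
      _ ≤ ∑ s', |w s'| := by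
          apply Finset.sum_le_sum
          intro s' _
          rw [abs_mul, abs_of_nonneg (p.2.1 s')]
          have h1 : p.1 s' ≤ 1 := by
            have := Finset.single_le_sum (f := fun i => p.1 i)
              (fun i _ => p.2.1 i) (Finset.mem_univ s')
            linarith [p.2.2]
          nlinarith [abs_nonneg (w s'), p.2.1 s']
  -- integrability on probability measures in U
  have hint : ∀ β ∈ U s a, Integrable f β := by
    intro β hβ
    haveI := hprob s a β hβ
    exact (integrable_const B).mono' hmeas.aestronglyMeasurable
      (Filter.Eventually.of_forall fun p => by
        simpa [Real.norm_eq_abs] using hbound p)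
  set T : Set ℝ := (fun β => ∫ p, f p ∂β) '' U s a with hT
  have hTne : T.Nonempty := (hUne s a).image _
  have hTbdd : BddAbove T := by
    refine ⟨B, ?_⟩
    rintro x ⟨β, hβ, rfl⟩
    haveI := hprob s a β hβ
    calc ∫ p, f p ∂β ≤ ∫ _, B ∂β :=
          integral_mono (hint β hβ) (integrable_const B)
            (fun p => (abs_le.mp (hbound p)).2)
      _ = B := by simp
  -- rewrite using dual representation
  rw [hrep]
  have himg : (fun β => ∫ p, (c (s, a) + γ * ∑ s', p.1 s' * ∑ a', π s' a' * Q (s', a')) ∂β)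
      '' U s a = (fun x => c (s, a) + γ * x) '' T := by
    rw [hT, Set.image_image]
    apply Set.image_congr
    intro β hβ
    haveI := hprob s a β hβ
    have : (fun p => c (s, a) + γ * ∑ s', p.1 s' * ∑ a', π s' a' * Q (s', a'))
        = fun p => c (s, a) + γ * f p := rfl
    rw [this, integral_add (integrable_const _) ((hint β hβ).const_mul γ),
      integral_const, integral_const_mul]
    simp
  rw [himg]
  have hmono : Monotone (fun x : ℝ => c (s, a) + γ * x) :=
    fun x y hxy => by dsimp; nlinarith
  have := hmono.map_csSup_of_continuousAt
    (Continuous.continuousAt (by continuity)) hTne hTbdd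
  exact this.symm
end
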